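/- arXiv:1705.03192 — 2 statements merged into one kernel-verified Lean document; each statement's English description precedes it below -/
import Mathlib

section
/- Let L be the (K,D) AIR matrix. Suppose L(j,k)=1 lies in the even-submatrix I_{λ_{2i} × β_{2i}λ_{2i}} for some i ∈ [0, ⌊l/2⌋], and the column index of this entry within the submatrix satisfies k_R = cλ_{2i} + d with 0 ≤ d < λ_{2i}. Then the up-distance of L(j,k) equals λ_{2i−1} − cλ_{2i}. -/
/-- Entry (j,k) of the AIR matrix of size K × n (n = K - D), as a Boolean. -/
def airEntry : ℕ → ℕ → ℕ → ℕ → Bool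
  | K, n, j, k =>
    if h : n = 0 ∨ K ≤ n then decide (j = k)
    else
      if j < K - K % n then decide (j % n = k % n)
      else
        if k < n - n % (K % n) then decide (k % (K % n) = j - (K - K % n))
        else airEntry (K % n) (n % (K % n)) (j - (K - K % n)) (k - (n - n % (K % n)))
  termination_by K n _ _ => K
  decreasing_by
    push_neg at h
    exact lt_trans (Nat.mod_lt _ (Nat.pos_of_ne_zero h.1)) h.2

/-- The pair (λ_{i-1}, λ_i) of the Euclidean chain, with λ_{-1} = K - D and λ₀ = D. -/
def lamPair (K D : ℕ) : ℕ → ℕ × ℕ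
  | 0 => (K - D, D)
  | i + 1 =>
    let p := lamPair K D i
    (p.2, if p.2 = 0 then 0 else p.1 % p.2)

/-- λ_i of the Euclidean chain. -/
def lam (K D i : ℕ) : ℕ := (lamPair K D i).2

/-- λ_{i-1} of the Euclidean chain (so `lamS K D 0 = K - D`). -/
def lamS (K D i : ℕ) : ℕ := (lamPair K D i).1

/-- β_i = λ_{i-1} / λ_i of the Euclidean chain. -/
def beta (K D i : ℕ) : ℕ := (lamPair K D i).1 / (lamPair K D i).2

/-- down-distance of the diagonal entry L(k,k) of the K × n AIR matrix. -/
noncomputable def ddown (K n k : ℕ) : ℕ :=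
  sSup {t : ℕ | 0 < t ∧ k + t < K ∧ airEntry K n (k + t) k = true}

/-- up-distance of the entry L(j,k) of the K × n AIR matrix. -/
noncomputable def dup (K n j k : ℕ) : ℕ :=
  j - sSup {j' : ℕ | j' < j ∧ airEntry K n j' k = true}

/-- right-distance of the entry L(j,k) of the K × n AIR matrix. -/
noncomputable def dright (K n j k : ℕ) : ℕ :=
  sInf {t : ℕ | 0 < t ∧ k + t < n ∧ airEntry K n j (k + t) = true}

/-!
`airEntry K n` splits the `K × n` matrix into copies of `I_n` stacked on top, a row of copies of
`I_{K % n}` in the bottom `K % n` rows on the left, and the lower-right corner, where it recurses.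
Following the recursion `t` times leads to a corner with `B` columns whose bottom `A` rows begin
with copies of `I_A`. The entry of such a copy in corner column `cA + d` has its nearest `1` above
in the last copy of `I_B` of the corner, `B - cA` rows higher; everything above the corner lies
above that copy. The pairs `(B, A)` run through the Euclidean algorithm started at `(n, K % n)`,
which is the chain `(λ_{2i-1}, λ_{2i})` up to an index shift.
-/

def euclidDoubleStep (p : ℕ × ℕ) : ℕ × ℕ := (p.1 % p.2, p.2 % (p.1 % p.2))

/-- After `t` recursive calls, `airEntry K n` works on a corner with `(stripDims K n t).1` columns
whose bottom `(stripDims K n t).2` rows start with copies of the identity of that size. -/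
def stripDims (K n t : ℕ) : ℕ × ℕ := euclidDoubleStep^[t] (n, K % n)

lemma stripDims_succ (K n t : ℕ) :
    stripDims K n (t + 1) = stripDims (K % n) (n % (K % n)) t :=
  Function.iterate_succ_apply euclidDoubleStep t _

lemma stripDims_fst_antitone (K n : ℕ) : Antitone fun t => (stripDims K n t).1 :=
  antitone_nat_of_succ_le fun t => by
    simp only [stripDims, Function.iterate_succ_apply']
    exact Nat.mod_le _ _

lemma stripDims_snd_antitone (K n : ℕ) : Antitone fun t => (stripDims K n t).2 :=
  antitone_nat_of_succ_le fun t => by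
    simp only [stripDims, Function.iterate_succ_apply']
    exact Nat.mod_le _ _

lemma two_mul_mod_le {n m : ℕ} (hm : 0 < m) (hmn : m ≤ n) : 2 * (n % m) ≤ n := by
  have hlt := Nat.mod_lt n hm
  have hle : n % m ≤ n - m := by
    rw [Nat.mod_eq_sub_mod hmn]
    exact Nat.mod_le _ _
  omega

lemma two_mul_stripDims_fst_le {K n t : ℕ} (ht : 0 < t) (hA : 0 < (stripDims K n t).2) :
    2 * (stripDims K n t).1 ≤ n := by
  have hB : (stripDims K n t).1 ≤ n % (K % n) := stripDims_fst_antitone K n ht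
  have hA₀ : (stripDims K n t).2 ≤ K % n := stripDims_snd_antitone K n (Nat.zero_le t)
  rcases n.eq_zero_or_pos with rfl | hn
  · simp_all
  · have := two_mul_mod_le (n := n) (by omega) (Nat.mod_lt K hn).le
    omega

section Blocks

variable {K n j k : ℕ}

lemma airEntry_top (hn : 0 < n) (hnK : n < K) (hj : j < K - K % n) :
    airEntry K n j k = decide (j % n = k % n) := by
  rw [airEntry, dif_neg (by omega), if_pos hj]

lemma airEntry_bottomLeft (hn : 0 < n) (hnK : n < K) (hj : K - K % n ≤ j)
    (hk : k < n - n % (K % n)) :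
    airEntry K n j k = decide (k % (K % n) = j - (K - K % n)) := by
  rw [airEntry, dif_neg (by omega), if_neg (by omega), if_pos hk]

lemma airEntry_bottomRight (hn : 0 < n) (hnK : n < K) (hj : K - K % n ≤ j)
    (hk : n - n % (K % n) ≤ k) :
    airEntry K n j k =
      airEntry (K % n) (n % (K % n)) (j - (K - K % n)) (k - (n - n % (K % n))) := by
  rw [airEntry, dif_neg (by omega), if_neg (by omega), if_neg (by omega)]

lemma dup_eq_of_isGreatest {p : ℕ}
    (h : IsGreatest {j' | j' < j ∧ airEntry K n j' k = true} p) : dup K n j k = j - p := by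
  rw [dup, h.csSup_eq]

lemma isGreatest_upSet_top (hn : 0 < n) (hnK : n < K) (hj : n ≤ j) (hjT : j < K - K % n)
    (he : airEntry K n j k = true) :
    IsGreatest {j' | j' < j ∧ airEntry K n j' k = true} (j - n) := by
  have hjk : j % n = k % n := of_decide_eq_true ((airEntry_top hn hnK hjT).symm.trans he)
  refine ⟨⟨by omega, ?_⟩, fun x ⟨hxj, hx⟩ => ?_⟩
  · rw [airEntry_top hn hnK (by omega), ← Nat.mod_eq_sub_mod hj, hjk, decide_eq_true_eq]
  · rw [airEntry_top hn hnK (by omega), decide_eq_true_eq] at hx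
    have := Nat.ModEq.add_le_of_lt (hx.trans hjk.symm) hxj
    omega

lemma isGreatest_upSet_bottomLeft (hn : 0 < n) (hnK : n < K) (hj : K - K % n ≤ j)
    (hk : k < n - n % (K % n)) (he : airEntry K n j k = true) :
    IsGreatest {j' | j' < j ∧ airEntry K n j' k = true} (K - K % n - n + k) := by
  have hjk : k % (K % n) = j - (K - K % n) :=
    of_decide_eq_true ((airEntry_bottomLeft hn hnK hj hk).symm.trans he)
  have hT : K / n * n = K - K % n := Nat.div_mul_self_eq_mod_sub_self
  have hnT : n ≤ K - K % n := hT ▸ Nat.le_mul_of_pos_left n (Nat.div_pos hnK.le hn)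
  have hTk : (K - K % n + k) % n = k := by
    rw [← hT, Nat.mul_add_mod_self_right, Nat.mod_eq_of_lt (by omega)]
  refine ⟨⟨by omega, ?_⟩, fun x ⟨hxj, hx⟩ => ?_⟩
  · rw [airEntry_top hn hnK (by omega), show K - K % n - n + k = K - K % n + k - n by omega,
      ← Nat.mod_eq_sub_mod (by omega), hTk, Nat.mod_eq_of_lt (by omega), decide_eq_true_eq]
  · by_cases hxT : x < K - K % n
    · rw [airEntry_top hn hnK hxT, decide_eq_true_eq, Nat.mod_eq_of_lt (by omega : k < n),
        ← hTk] at hx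
      have := Nat.ModEq.add_le_of_lt hx (by omega : x < K - K % n + k)
      omega
    · rw [airEntry_bottomLeft hn hnK (by omega) hk, decide_eq_true_eq] at hx
      omega

lemma isGreatest_upSet_of_bottomRight {p : ℕ} (hn : 0 < n) (hnK : n < K) (hj : K - K % n ≤ j)
    (hk : n - n % (K % n) ≤ k)
    (h : IsGreatest {x | x < j - (K - K % n) ∧
      airEntry (K % n) (n % (K % n)) x (k - (n - n % (K % n))) = true} p) :
    IsGreatest {x | x < j ∧ airEntry K n x k = true} (p + (K - K % n)) := by
  refine ⟨⟨by have := h.1.1; omega, ?_⟩, fun x ⟨hxj, hx⟩ => ?_⟩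
  · rw [airEntry_bottomRight hn hnK (by omega) hk, Nat.add_sub_cancel]
    exact h.1.2
  · by_cases hxT : x < K - K % n
    · omega
    · rw [airEntry_bottomRight hn hnK (by omega) hk] at hx
      have := h.2 ⟨by omega, hx⟩
      omega

end Blocks

theorem exists_isGreatest_upSet_of_strip (t : ℕ) :
    ∀ {K n j k B A c d : ℕ}, n < K → stripDims K n t = (B, A) →
      k = n - B + (c * A + d) → c * A + d < B / A * A → d < A → K - A ≤ j → j < K →
      airEntry K n j k = true →
      ∃ p, IsGreatest {x | x < j ∧ airEntry K n x k = true} p ∧ p + (B - c * A) = j := by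
  induction t with
  | zero =>
    intro K n j k B A c d hnK hBA hk hw hd hj hjK he
    obtain ⟨rfl, rfl⟩ := Prod.mk.inj hBA
    have hwn : n / (K % n) * (K % n) = n - n % (K % n) := Nat.div_mul_self_eq_mod_sub_self
    have hn : 0 < n := by have := Nat.div_mul_le_self n (K % n); omega
    have hkd : k % (K % n) = d := by
      rw [hk, Nat.sub_self, Nat.zero_add, Nat.mul_add_mod_self_right, Nat.mod_eq_of_lt hd]
    have hj' : j = K - K % n + d := by
      have := of_decide_eq_true ((airEntry_bottomLeft hn hnK (by omega) (by omega)).symm.trans he)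
      omega
    have hT : K / n * n = K - K % n := Nat.div_mul_self_eq_mod_sub_self
    have hnT : n ≤ K - K % n := hT ▸ Nat.le_mul_of_pos_left n (Nat.div_pos hnK.le hn)
    exact ⟨_, isGreatest_upSet_bottomLeft hn hnK (by omega) (by omega) he, by omega⟩
  | succ t ih =>
    intro K n j k B A c d hnK hBA hk hw hd hj hjK he
    have hBn' : B ≤ n % (K % n) := by
      have h := stripDims_fst_antitone K n (Nat.le_add_left 1 t)
      simp only [hBA] at h
      exact h
    have hAK' : A ≤ K % n := by
      have h := stripDims_snd_antitone K n (Nat.zero_le (t + 1))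
      simp only [hBA] at h
      exact h
    have hB : 0 < B := by have := Nat.div_mul_le_self B A; omega
    have hn'K' : n % (K % n) < K % n := Nat.mod_lt _ (by omega)
    have hn'n : n % (K % n) ≤ n := Nat.mod_le _ _
    have hK'K : K % n ≤ K := Nat.mod_le _ _
    rw [stripDims_succ] at hBA
    obtain ⟨p, hp, hpj⟩ := ih hn'K' hBA (k := k - (n - n % (K % n))) (j := j - (K - K % n))
      (by omega) hw hd (by omega) (by omega)
      ((airEntry_bottomRight (by omega) hnK (by omega) (by omega)).symm.trans he)
    exact ⟨_, isGreatest_upSet_of_bottomRight (by omega) hnK (by omega) (by omega) hp, by omega⟩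

theorem dup_eq_of_strip {K n t j k B A c d : ℕ} (hnK : n < K) (hBA : stripDims K n t = (B, A))
    (hk₁ : n - B ≤ k) (hk₂ : k < n - B + B / A * A) (hkR : k % (n - B) = c * A + d)
    (hd : d < A) (hj₁ : K - A ≤ j) (hj₂ : j < K) (he : airEntry K n j k = true) :
    dup K n j k = B - c * A := by
  have hk : k = n - B + (c * A + d) := by
    rcases t.eq_zero_or_pos with rfl | ht
    · obtain ⟨rfl, rfl⟩ := Prod.mk.inj hBA
      rw [Nat.sub_self, Nat.mod_zero] at hkR
      omega
    · -- the strip is at most half as wide as the matrix, so `k % (n - B)` is `k - (n - B)`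
      have h2B := two_mul_stripDims_fst_le ht (by rw [hBA]; omega)
      have := Nat.div_mul_le_self B A
      rw [hBA] at h2B
      rw [Nat.mod_eq_sub_mod hk₁, Nat.mod_eq_of_lt (by dsimp only at h2B; omega)] at hkR
      omega
  obtain ⟨p, hp, hpj⟩ := exists_isGreatest_upSet_of_strip t hnK hBA hk (by omega) hd hj₁ hj₂ he
  rw [dup_eq_of_isGreatest hp]
  omega

lemma lamPair_add_two {K D s : ℕ} (h₀ : lam K D s ≠ 0) (h₁ : lam K D (s + 1) ≠ 0) :
    lamPair K D (s + 2) = euclidDoubleStep (lamPair K D s) := by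
  have e : lam K D (s + 1) = lamS K D s % lam K D s := if_neg h₀
  show (lam K D (s + 1), if lam K D (s + 1) = 0 then 0 else lam K D s % lam K D (s + 1)) = _
  rw [if_neg h₁, e]
  rfl

lemma lamPair_add_two_mul {K D : ℕ} (s t : ℕ) (h : ∀ r < s + 2 * t, lam K D r ≠ 0) :
    lamPair K D (s + 2 * t) = euclidDoubleStep^[t] (lamPair K D s) := by
  induction t with
  | zero => rfl
  | succ t ih =>
    rw [Function.iterate_succ_apply', ← ih fun r hr => h r (by omega),
      show s + 2 * (t + 1) = s + 2 * t + 2 by ring]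
    exact lamPair_add_two (h _ (by omega)) (h _ (by omega))

lemma stripDims_eq_lamPair_of_lt {K D t : ℕ} (hDn : D < K - D)
    (h : ∀ r < 2 * t, lam K D r ≠ 0) : stripDims K (K - D) t = lamPair K D (2 * t) := by
  have hK : K % (K - D) = D := by
    calc K % (K - D) = (D + (K - D)) % (K - D) := by rw [Nat.add_sub_cancel' (by omega)]
      _ = D := by rw [Nat.add_mod_right, Nat.mod_eq_of_lt hDn]
  rw [stripDims, hK, ← Nat.zero_add (2 * t), lamPair_add_two_mul 0 t (by simpa using h)]
  rfl

lemma stripDims_eq_lamPair_of_gt {K D t : ℕ} (hnD : K - D < D)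
    (h : ∀ r < 2 * t + 2, lam K D r ≠ 0) :
    stripDims K (K - D) t = lamPair K D (2 * t + 2) := by
  have hl₁ : lam K D 1 = K - D := (if_neg (by omega : D ≠ 0)).trans (Nat.mod_eq_of_lt hnD)
  have hDK : D ≤ K := by have := h 1 (by omega); omega
  have hK : K % (K - D) = D % (K - D) := by
    calc K % (K - D) = (D + (K - D)) % (K - D) := by rw [Nat.add_sub_cancel' hDK]
      _ = D % (K - D) := Nat.add_mod_right D (K - D)
  have h₂ : lamPair K D 2 = (K - D, D % (K - D)) := by
    show (lam K D 1, if lam K D 1 = 0 then 0 else D % lam K D 1) = _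
    rw [if_neg (h 1 (by omega)), hl₁]
  rw [stripDims, hK, ← h₂, add_comm, lamPair_add_two_mul 2 t (by simpa [add_comm] using h)]

theorem stmt7_general (K D l i j k c d : ℕ) (hD : 0 < D) (hDK : D < K)
    (hmin : ∀ j ≤ l, lam K D j ≠ 0)
    (hi : 2 * i ≤ l)
    (hj1 : K - lam K D (2 * i) ≤ j) (hj2 : j < K)
    (hk1 : K - D - lamS K D (2 * i) ≤ k)
    (hk2 : k < K - D - lamS K D (2 * i) + beta K D (2 * i) * lam K D (2 * i))
    (he : airEntry K (K - D) j k = true)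
    (hcd : k % (K - D - lamS K D (2 * i)) = c * lam K D (2 * i) + d)
    (hd : d < lam K D (2 * i)) :
    dup K (K - D) j k = lamS K D (2 * i) - c * lam K D (2 * i) := by
  rcases lt_trichotomy D (K - D) with hlt | heq | hgt
  · exact dup_eq_of_strip (t := i) (by omega)
      (stripDims_eq_lamPair_of_lt hlt fun r _ => hmin r (by omega)) hk1 hk2 hcd hd hj1 hj2 he
  · -- here `λ₁ = 0`, and the block `I_D` lies inside the stacked copies of `I_{K-D}`
    have hl₁ : lam K D 1 = 0 := by
      show (if D = 0 then 0 else (K - D) % D) = 0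
      rw [if_neg hD.ne', ← heq, Nat.mod_self]
    obtain rfl : i = 0 := by
      by_contra hi0
      exact hmin 1 (by omega) hl₁
    change K - D ≤ j at hj1
    change k < K - D - (K - D) + (K - D) / D * D at hk2
    change k % (K - D - (K - D)) = c * D + d at hcd
    rw [← heq, Nat.div_self hD, Nat.sub_self] at hk2
    rw [Nat.sub_self, Nat.mod_zero] at hcd
    obtain rfl : c = 0 := by
      by_contra hc
      have := Nat.le_mul_of_pos_left D (Nat.pos_of_ne_zero hc)
      omega
    have hK : K % (K - D) = 0 := Nat.mod_eq_zero_of_dvd ⟨2, by omega⟩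
    rw [dup_eq_of_isGreatest (isGreatest_upSet_top (by omega) (by omega) hj1 (by omega) he)]
    change j - (j - (K - D)) = K - D - 0 * D
    omega
  · -- `β₀ = 0`, so for `i = 0` the block is empty
    obtain ⟨m, rfl⟩ : ∃ m, i = m + 1 := Nat.exists_eq_add_one_of_ne_zero <| by
      rintro rfl
      change k < K - D - (K - D) + (K - D) / D * D at hk2
      rw [Nat.div_eq_of_lt hgt] at hk2
      omega
    exact dup_eq_of_strip (t := m) (by omega)
      (stripDims_eq_lamPair_of_gt hgt fun r _ => hmin r (by omega)) hk1 hk2 hcd hd hj1 hj2 he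

/-- Lemma 2 (even submatrix): up-distance of an entry in I_{λ_{2i} × β_{2i}λ_{2i}}
with within-block column index k_R = cλ_{2i} + d. -/
theorem stmt7 (K D l i j k c d : ℕ) (hD : 0 < D) (hDK : D < K)
    (hl : lam K D (l + 1) = 0) (hmin : ∀ j ≤ l, lam K D j ≠ 0)
    (hi : 2 * i ≤ l)
    (hj1 : K - lam K D (2 * i) ≤ j) (hj2 : j < K)
    (hk1 : K - D - lamS K D (2 * i) ≤ k)
    (hk2 : k < K - D - lamS K D (2 * i) + beta K D (2 * i) * lam K D (2 * i))
    (he : airEntry K (K - D) j k = true)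
    (hcd : k % (K - D - lamS K D (2 * i)) = c * lam K D (2 * i) + d)
    (hd : d < lam K D (2 * i)) :
    dup K (K - D) j k = lamS K D (2 * i) - c * lam K D (2 * i) :=
  stmt7_general K D l i j k c d hD hDK hmin hi hj1 hj2 hk1 hk2 he hcd hd
end

section
/- Let L be the (K,D) AIR matrix and let L(j,k)=1 lie in an even-submatrix I_{λ_{2i} × β_{2i}λ_{2i}} (i ∈ [0, ⌊l/2⌋−1]) with within-block column index k_R ∈ [(β_{2i}−1)λ_{2i}, β_{2i}λ_{2i} − 1] and within-block row index j_R = cλ_{2i+1} + d for integers c, d with 0 ≤ d < λ_{2i+1}. Then the right-distance of L(j,k) equals λ_{2i} − cλ_{2i+1}. -/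
/-!
`L_{A,B}` (`B < A`) consists of stacked copies of `I_B`, below them a band of side-by-side copies
of `I_b` with `b = A % B`, and in the bottom-right corner the AIR matrix `L_{b, B % b}`. So two
steps of the Euclidean algorithm `(x, y) ↦ (y, x % y)` pass from a matrix to its corner, the even
submatrix `I_{λ_{2i} × β_{2i}λ_{2i}}` is the band of a nested corner, and entries and
right-distances there are those of the corner matrix in shifted coordinates. In the band, row
`j_R = c s + d` (`s = B % b`) of the last block has its `1` in column `(β - 1) b + j_R`; the next
`1` to the right is the first `1` of row `j_R` of the corner `L_{b, s}`, in its column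
`j_R % s = d`, at distance `b - j_R + d = b - c s`.
-/

theorem Nat.add_mod_le_of_le {a b : ℕ} (h : b ≤ a) : b + a % b ≤ a := by
  rcases Nat.eq_zero_or_pos b with rfl | hb
  · simp
  · have hq : b ≤ b * (a / b) := Nat.le_mul_of_pos_right b (Nat.div_pos h hb)
    have := Nat.div_add_mod a b
    omega

theorem Nat.mod_eq_sub_of_sub_lt {a k : ℕ} (h₁ : a ≤ k) (h₂ : k - a < a) :
    k % a = k - a := by
  rw [Nat.mod_eq_sub_mod h₁, Nat.mod_eq_of_lt h₂]

theorem Nat.mod_eq_sub_sub_mod {A B j : ℕ} (hB : 0 < B) (h₁ : A - A % B ≤ j) (h₂ : j < A) :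
    j % B = j - (A - A % B) := by
  have hA : A - A % B = B * (A / B) := by have := Nat.mod_add_div A B; omega
  have hlt : A % B < B := Nat.mod_lt A hB
  rw [hA] at h₁ ⊢
  rw [← Nat.sub_mul_mod h₁, Nat.mod_eq_of_lt (by omega)]

section AirEntry

variable {A B j k : ℕ}

theorem airEntry_of_degenerate (h : B = 0 ∨ A ≤ B) : airEntry A B j k = decide (j = k) := by
  rw [airEntry, dif_pos h]

theorem airEntry_of_top (hB : 0 < B) (hBA : B < A) (hj : j < A - A % B) :
    airEntry A B j k = decide (j % B = k % B) := by
  rw [airEntry, dif_neg (by omega), if_pos hj]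

theorem airEntry_of_band (hB : 0 < B) (hBA : B < A) (hj : A - A % B ≤ j)
    (hk : k < B - B % (A % B)) :
    airEntry A B j k = decide (k % (A % B) = j - (A - A % B)) := by
  rw [airEntry, dif_neg (by omega), if_neg (by omega), if_pos hk]

theorem airEntry_of_corner (hB : 0 < B) (hBA : B < A) (hj : A - A % B ≤ j)
    (hk : B - B % (A % B) ≤ k) :
    airEntry A B j k =
      airEntry (A % B) (B % (A % B)) (j - (A - A % B)) (k - (B - B % (A % B))) := by
  rw [airEntry, dif_neg (by omega), if_neg (by omega), if_neg (by omega)]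

theorem airEntry_of_le_mod (hj : j < A) (hk : k ≤ j % B) :
    airEntry A B j k = decide (k = j % B) := by
  by_cases hdeg : B = 0 ∨ A ≤ B
  · have : j % B = j := by
      rcases hdeg with rfl | h
      · exact Nat.mod_zero j
      · exact Nat.mod_eq_of_lt (by omega)
    rw [airEntry_of_degenerate hdeg, this, decide_eq_decide]
    exact eq_comm
  have hB : 0 < B := by omega
  have hkB : k < B := lt_of_le_of_lt hk (Nat.mod_lt j hB)
  by_cases htop : j < A - A % B
  · rw [airEntry_of_top hB (by omega) htop, Nat.mod_eq_of_lt hkB, decide_eq_decide]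
    exact eq_comm
  · have hjB := Nat.mod_eq_sub_sub_mod hB (by omega) hj
    have hb : A % B < B := Nat.mod_lt A hB
    have hband := Nat.add_mod_le_of_le hb.le
    rw [airEntry_of_band hB (by omega) (by omega) (by omega), Nat.mod_eq_of_lt (by omega), hjB]

end AirEntry

theorem dright_congr {A B j k A' B' j' k' : ℕ} (hB : B - k = B' - k')
    (he : ∀ t, airEntry A B j (k + t) = airEntry A' B' j' (k' + t)) :
    dright A B j k = dright A' B' j' k' := by
  unfold dright
  congr 1
  ext t
  simp only [Set.mem_ofPred_eq, he]
  have hlt : k + t < B ↔ k' + t < B' := by omega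
  rw [hlt]

theorem dright_of_last_band_block {A B j k c d : ℕ} (hBA : B < A)
    (hj₁ : A - A % B ≤ j) (hj₂ : j < A)
    (hk₁ : (B / (A % B) - 1) * (A % B) ≤ k) (hk₂ : k < B / (A % B) * (A % B))
    (he : airEntry A B j k = true)
    (hjR : j - (A - A % B) = c * (B % (A % B)) + d) (hd : d < B % (A % B)) :
    dright A B j k = A % B - c * (B % (A % B)) := by
  set b := A % B
  set s := B % b with hs_def
  set r := j - (A - b)
  replace hs_def : s = B % (A % B) := hs_def
  have hb : 0 < b := Nat.pos_of_ne_zero fun h => by simp [h] at hk₂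
  have hβ : 0 < B / b := Nat.pos_of_ne_zero fun h => by simp [h] at hk₂
  have hB : 0 < B := Nat.pos_of_ne_zero fun h => by simp [h] at hβ
  obtain ⟨q, hq⟩ : ∃ q, B / b = q + 1 := ⟨B / b - 1, by omega⟩
  rw [hq, Nat.add_sub_cancel] at hk₁
  rw [hq, Nat.succ_mul] at hk₂
  have hBsplit : q * b + b + s = B := by
    have := Nat.div_add_mod' B b
    rwa [hq, Nat.add_one_mul] at this
  have hr : r < b := by have := Nat.mod_le A B; omega
  have hrs : r % s = d := by rw [hjR, Nat.mul_add_mod_of_lt hd]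
  have hband : ∀ t, k + t < q * b + b → airEntry A B j (k + t) = decide ((k + t) % b = r) :=
    fun t ht => airEntry_of_band hB hBA hj₁ (by omega)
  have hk : k = q * b + r := by
    have hkr := of_decide_eq_true ((hband 0 (by omega)).symm.trans he)
    rw [Nat.add_zero, ← Nat.sub_mul_mod (by rw [Nat.mul_comm]; exact hk₁), Nat.mul_comm,
      Nat.mod_eq_of_lt (by omega)] at hkr
    omega
  have hcorner : ∀ t, q * b + b ≤ k + t →
      airEntry A B j (k + t) = airEntry b s r (k + t - (q * b + b)) := by
    intro t ht
    rw [airEntry_of_corner hB hBA hj₁ (by omega)]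
    congr 1
    omega
  refine IsLeast.csInf_eq ⟨⟨?_, ?_, ?_⟩, ?_⟩
  · omega
  · omega
  · rw [hcorner _ (by omega), show k + (b - c * s) - (q * b + b) = r % s by omega,
      airEntry_of_le_mod hr le_rfl, decide_eq_true_eq]
  · rintro t ⟨ht, htB, het⟩
    by_contra! hlt
    by_cases hband_t : k + t < q * b + b
    · rw [hband t hband_t, hk, Nat.add_assoc, Nat.add_comm, Nat.add_mul_mod_self_right,
        Nat.mod_eq_of_lt (by omega)] at het
      rw [decide_eq_true_eq] at het
      omega
    · rw [hcorner t (by omega), airEntry_of_le_mod hr (by omega)] at het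
      rw [decide_eq_true_eq] at het
      omega

def euclidStep (x : ℕ × ℕ) : ℕ × ℕ := (x.2, x.1 % x.2)

namespace euclidStep

theorem iterate_two (x : ℕ × ℕ) : euclidStep^[2] x = (x.1 % x.2, x.2 % (x.1 % x.2)) := rfl

theorem iterate_two_mul_le (m : ℕ) (x : ℕ × ℕ) :
    (euclidStep^[2 * m] x).1 ≤ x.1 ∧ (euclidStep^[2 * m] x).2 ≤ x.2 := by
  induction m generalizing x with
  | zero => simp
  | succ m ih =>
    rw [show 2 * (m + 1) = 2 * m + 2 by ring, Function.iterate_add_apply]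
    obtain ⟨h₁, h₂⟩ := ih (euclidStep^[2] x)
    exact ⟨h₁.trans (Nat.mod_le _ _), h₂.trans (Nat.mod_le _ _)⟩

theorem iterate_snd_lt_fst {x : ℕ × ℕ} {q : ℕ} (hx : x.2 < x.1)
    (hpos : ∀ p < q, 0 < (euclidStep^[p] x).2) :
    (euclidStep^[q] x).2 < (euclidStep^[q] x).1 := by
  cases q with
  | zero => exact hx
  | succ q =>
    rw [Function.iterate_succ_apply']
    exact Nat.mod_lt _ (hpos q q.lt_succ_self)

theorem iterate_two_mul_eq_or_add_le {x : ℕ × ℕ} {m : ℕ}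
    (hpos : ∀ p < 2 * m, 0 < (euclidStep^[p] x).2) :
    (euclidStep^[2 * m] x).2 = x.2 ∨
      (euclidStep^[2 * m] x).1 + (euclidStep^[2 * m] x).2 ≤ x.2 := by
  cases m with
  | zero => exact Or.inl rfl
  | succ m =>
    right
    rw [show 2 * (m + 1) = 2 + 2 * m by ring, Function.iterate_add_apply]
    set y := euclidStep^[2 * m] x
    have hy : 0 < y.2 := hpos (2 * m) (by omega)
    calc y.1 % y.2 + y.2 % (y.1 % y.2) ≤ y.2 :=
          Nat.add_mod_le_of_le (Nat.mod_lt _ hy).le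
      _ ≤ x.2 := (iterate_two_mul_le m x).2

end euclidStep

theorem airEntry_euclidStep_iterate {x : ℕ × ℕ} {m j k : ℕ} (hx : x.2 < x.1)
    (hpos : ∀ p < 2 * m, 0 < (euclidStep^[p] x).2)
    (hj : x.1 - (euclidStep^[2 * m] x).1 ≤ j) (hk : x.2 - (euclidStep^[2 * m] x).2 ≤ k) :
    airEntry x.1 x.2 j k =
      airEntry (euclidStep^[2 * m] x).1 (euclidStep^[2 * m] x).2
        (j - (x.1 - (euclidStep^[2 * m] x).1)) (k - (x.2 - (euclidStep^[2 * m] x).2)) := by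
  induction m with
  | zero => simp
  | succ m ih =>
    have hpos' : ∀ p < 2 * m, 0 < (euclidStep^[p] x).2 := fun p hp => hpos p (by omega)
    have hy : 0 < (euclidStep^[2 * m] x).2 := hpos (2 * m) (by omega)
    have hyx := euclidStep.iterate_two_mul_le m x
    have hlt := euclidStep.iterate_snd_lt_fst hx hpos'
    have ih := ih hpos'
    rw [show 2 * (m + 1) = 2 + 2 * m by ring, Function.iterate_add_apply,
      euclidStep.iterate_two] at hj hk ⊢
    generalize euclidStep^[2 * m] x = y at *
    have hzy : y.1 % y.2 ≤ y.1 ∧ y.2 % (y.1 % y.2) ≤ y.2 :=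
      ⟨Nat.mod_le _ _, Nat.mod_le _ _⟩
    dsimp only at hj hk ⊢
    rw [ih (by omega) (by omega), airEntry_of_corner hy hlt (by omega) (by omega)]
    congr 1 <;> omega

theorem dright_euclidStep_iterate {x : ℕ × ℕ} {m j k : ℕ} (hx : x.2 < x.1)
    (hpos : ∀ p < 2 * m, 0 < (euclidStep^[p] x).2)
    (hj : x.1 - (euclidStep^[2 * m] x).1 ≤ j) (hk : x.2 - (euclidStep^[2 * m] x).2 ≤ k) :
    dright x.1 x.2 j k =
      dright (euclidStep^[2 * m] x).1 (euclidStep^[2 * m] x).2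
        (j - (x.1 - (euclidStep^[2 * m] x).1)) (k - (x.2 - (euclidStep^[2 * m] x).2)) := by
  have hle := euclidStep.iterate_two_mul_le m x
  refine dright_congr (by omega) fun t => ?_
  rw [airEntry_euclidStep_iterate hx hpos hj (by omega)]
  congr 1
  omega

theorem dright_of_iterate_last_band_block {x : ℕ × ℕ} {m j k c d A B : ℕ} (hx : x.2 < x.1)
    (hpos : ∀ p < 2 * m, 0 < (euclidStep^[p] x).2) (hy : euclidStep^[2 * m] x = (A, B))
    (hj₁ : x.1 - A % B ≤ j) (hj₂ : j < x.1)
    (hk₁ : x.2 - B + (B / (A % B) - 1) * (A % B) ≤ k)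
    (hk₂ : k < x.2 - B + B / (A % B) * (A % B))
    (he : airEntry x.1 x.2 j k = true)
    (hjR : j - (x.1 - A % B) = c * (B % (A % B)) + d) (hd : d < B % (A % B)) :
    dright x.1 x.2 j k = A % B - c * (B % (A % B)) := by
  have hBA : B < A := by simpa [hy] using euclidStep.iterate_snd_lt_fst hx hpos
  have hle : A ≤ x.1 ∧ B ≤ x.2 := by simpa [hy] using euclidStep.iterate_two_mul_le m x
  have hAB : A % B ≤ A := Nat.mod_le A B
  have hj : x.1 - A ≤ j := by omega
  have hk : x.2 - B ≤ k := by omega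
  rw [airEntry_euclidStep_iterate hx hpos (by rwa [hy]) (by rwa [hy]), hy] at he
  rw [dright_euclidStep_iterate hx hpos (by rwa [hy]) (by rwa [hy]), hy]
  dsimp only at he ⊢
  exact dright_of_last_band_block hBA (by omega) (by omega) (by omega) (by omega) he
    (by rw [← hjR]; omega) hd

theorem lamPair_succ {K D p : ℕ} (h : lam K D p ≠ 0) :
    lamPair K D (p + 1) = euclidStep (lamPair K D p) := by
  change (_, if lam K D p = 0 then 0 else _) = _
  rw [if_neg h]
  rfl

theorem lam_succ {K D p : ℕ} (h : lam K D p ≠ 0) : lam K D (p + 1) = lamS K D p % lam K D p :=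
  congrArg Prod.snd (lamPair_succ h)

theorem beta_eq_lamS_div_lam (K D p : ℕ) : beta K D p = lamS K D p / lam K D p := rfl

theorem lamPair_add {K D r p : ℕ} (h : ∀ q < p, lam K D (r + q) ≠ 0) :
    lamPair K D (r + p) = euclidStep^[p] (lamPair K D r) := by
  induction p with
  | zero => rfl
  | succ p ih =>
    rw [← Nat.add_assoc, lamPair_succ (h p p.lt_succ_self),
      ih fun q hq => h q (by omega), Function.iterate_succ_apply']

/-- When `D > K - D` the chain starts with the extra step `λ_1 = K - D`, so the corner sits at
depth `i - 1` rather than `i`. -/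
theorem exists_euclidStep_iterate_eq_lamPair {K D i : ℕ} (hDK : D < K)
    (hlam : ∀ p ≤ 2 * i + 1, lam K D p ≠ 0) (hβ : 0 < beta K D (2 * i)) :
    ∃ m A B, euclidStep^[2 * m] (K, K - D) = (A, B) ∧ lamS K D (2 * i) = B ∧
      lam K D (2 * i) = A % B ∧ ∀ p < 2 * m, 0 < (euclidStep^[p] (K, K - D)).2 := by
  obtain ⟨r, m, hrm, hr⟩ :
      ∃ r m, r + 2 * m = 2 * i ∧ euclidStep (K, K - D) = lamPair K D r := by
    have hKmod : K % (K - D) = D % (K - D) := by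
      have := Nat.add_mod_right D (K - D)
      rwa [Nat.add_sub_cancel' hDK.le] at this
    rcases lt_or_ge D (K - D) with hlt | hge
    · exact ⟨0, i, by ring, by rw [euclidStep, hKmod, Nat.mod_eq_of_lt hlt]; rfl⟩
    · have hlt : K - D < D := by
        refine lt_of_le_of_ne hge fun h => hlam 1 (by omega) ?_
        rw [lam_succ (hlam 0 (by omega))]
        change (K - D) % D = 0
        rw [h, Nat.mod_self]
      have hi : i ≠ 0 := by
        rintro rfl
        exact hβ.ne' (Nat.div_eq_of_lt hlt)
      refine ⟨0 + 2, i - 1, by omega, ?_⟩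
      rw [lamPair_add fun q hq => by rw [Nat.zero_add]; exact hlam q (by omega),
        euclidStep.iterate_two]
      change (K - D, K % (K - D)) = ((K - D) % D, D % ((K - D) % D))
      rw [Nat.mod_eq_of_lt hlt, hKmod]
  have hm : euclidStep (euclidStep^[2 * m] (K, K - D)) = lamPair K D (2 * i) := by
    rw [← Function.iterate_succ_apply' euclidStep, Function.iterate_succ_apply, hr,
      ← lamPair_add fun q hq => hlam _ (by omega), hrm]
  refine ⟨m, _, _, rfl, by rw [lamS, ← hm]; rfl, by rw [lam, ← hm]; rfl, fun p hp => ?_⟩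
  cases p with
    | zero => exact Nat.sub_pos_of_lt hDK
    | succ p =>
      rw [Function.iterate_succ_apply, hr, ← lamPair_add fun q hq => hlam _ (by omega)]
      exact Nat.pos_of_ne_zero (hlam _ (by omega))

theorem stmt9_general (K D l i j k c d : ℕ) (hDK : D < K)
    (hmin : ∀ j ≤ l, lam K D j ≠ 0)
    (hi : i + 1 ≤ l / 2)
    (hj1 : K - lam K D (2 * i) ≤ j) (hj2 : j < K)
    (hk1 : K - D - lamS K D (2 * i) ≤ k)
    (hk2 : k < K - D - lamS K D (2 * i) + beta K D (2 * i) * lam K D (2 * i))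
    (he : airEntry K (K - D) j k = true)
    (hkR : (beta K D (2 * i) - 1) * lam K D (2 * i) ≤ k % (K - D - lamS K D (2 * i)))
    (hjR : j % (K - lam K D (2 * i)) = c * lam K D (2 * i + 1) + d)
    (hd : d < lam K D (2 * i + 1)) :
    dright K (K - D) j k = lam K D (2 * i) - c * lam K D (2 * i + 1) := by
  have hlam : ∀ p ≤ 2 * i + 1, lam K D p ≠ 0 := fun p hp => hmin p (by omega)
  have hβ : 0 < beta K D (2 * i) := Nat.pos_of_ne_zero fun h => by
    rw [h, Nat.zero_mul, Nat.add_zero] at hk2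
    omega
  obtain ⟨m, A, B, hy, hΛ, hb, hpos⟩ := exists_euclidStep_iterate_eq_lamPair hDK hlam hβ
  have hs : lam K D (2 * i + 1) = B % (A % B) := by
    rw [lam_succ (hlam (2 * i) (by omega)), hΛ, hb]
  simp only [beta_eq_lamS_div_lam, hΛ, hb, hs] at hj1 hk1 hk2 hkR hjR hd hβ ⊢
  have hx : (K, K - D).2 < (K, K - D).1 :=
    Nat.sub_lt (by omega) (Nat.pos_of_ne_zero (hlam 0 (by omega)))
  have hBA : B < A := by simpa [hy] using euclidStep.iterate_snd_lt_fst hx hpos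
  have hle : A ≤ K ∧ B ≤ K - D := by
    simpa [hy] using euclidStep.iterate_two_mul_le m (K, K - D)
  have hdepth : B = K - D ∨ A + B ≤ K - D := by
    simpa [hy] using euclidStep.iterate_two_mul_eq_or_add_le hpos
  have hB : 0 < B := Nat.pos_of_ne_zero fun h => by simp [h] at hβ
  have hbB : A % B < B := Nat.mod_lt A hB
  have hbA := Nat.add_mod_le_of_le hBA.le
  have hβb := Nat.div_mul_le_self B (A % B)
  rw [Nat.mod_eq_sub_of_sub_lt hj1 (by omega)] at hjR
  have hkR' : k % (K - D - B) = k - (K - D - B) := by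
    rcases hdepth with h | h
    · rw [h, Nat.sub_self, Nat.mod_zero, Nat.sub_zero]
    · exact Nat.mod_eq_sub_of_sub_lt hk1 (by omega)
  exact dright_of_iterate_last_band_block hx hpos hy hj1 hj2 (by omega) (by omega) he hjR hd

/-- Lemma 3 (case ii): right-distance of an entry of the even submatrix whose
within-block column index lies in [(β_{2i}−1)λ_{2i}, β_{2i}λ_{2i} − 1] and
within-block row index is j_R = cλ_{2i+1} + d equals λ_{2i} − cλ_{2i+1}. -/
theorem stmt9 (K D l i j k c d : ℕ) (hD : 0 < D) (hDK : D < K)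
    (hl : lam K D (l + 1) = 0) (hmin : ∀ j ≤ l, lam K D j ≠ 0)
    (hi : i + 1 ≤ l / 2)
    (hj1 : K - lam K D (2 * i) ≤ j) (hj2 : j < K)
    (hk1 : K - D - lamS K D (2 * i) ≤ k)
    (hk2 : k < K - D - lamS K D (2 * i) + beta K D (2 * i) * lam K D (2 * i))
    (he : airEntry K (K - D) j k = true)
    (hkR : (beta K D (2 * i) - 1) * lam K D (2 * i) ≤ k % (K - D - lamS K D (2 * i)))
    (hjR : j % (K - lam K D (2 * i)) = c * lam K D (2 * i + 1) + d)
    (hd : d < lam K D (2 * i + 1)) :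
    dright K (K - D) j k = lam K D (2 * i) - c * lam K D (2 * i + 1) :=
  stmt9_general K D l i j k c d hDK hmin hi hj1 hj2 hk1 hk2 he hkR hjR hd
end
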